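/- The number of matrices Y ∈ Z^{d×d} with entries in {−β,…,β} and rank(Y) ≤ k (rank over the rationals) is at most (2β+1)^{dk} · ((2β+1)^k + 1)^{dk} · 2^d, and in particular is at most (2β+1)^{O(dk)} when entries and coefficients are polynomially bounded. -/

import Mathlib

/-!
Pick a set `S` of at most `k` columns spanning the column space of `Y`, and then a set `T` of
at most `k` rows on which no nonzero vector of that column space vanishes; `T` depends only on
the columns in `S`. Every column of `Y` lies in the column space, so it is determined by its
entries in the rows of `T`. Hence `Y` is determined by `S` (at most `2 ^ d` choices), its columns
in `S` and its rows in `T`, each a `d × k` array of entries in `[-β, β]`, giving at most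
`2 ^ d * (2β+1) ^ (dk) * (2β+1) ^ (dk)` matrices.
-/

open Submodule Module Set

theorem exists_finset_card_le_finrank_forall_mem_span {K V ι : Type*} [DivisionRing K]
    [AddCommGroup V] [Module K V] [Fintype ι] (v : ι → V) :
    ∃ S : Finset ι, S.card ≤ finrank K (span K (range v)) ∧ ∀ i, v i ∈ span K (v '' S) := by
  classical
  obtain ⟨κ, a, ha, hspan, hli⟩ := exists_linearIndependent' K v
  have : Fintype κ := have := Finite.of_injective a ha; Fintype.ofFinite κ
  refine ⟨Finset.univ.image a, ?_, fun i => ?_⟩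
  · rw [Finset.card_image_of_injective _ ha, ← hspan, finrank_span_eq_card hli, Finset.card_univ]
  · rw [Finset.coe_image, Finset.coe_univ, image_univ, ← range_comp, hspan]
    exact subset_span (mem_range_self i)

namespace Matrix

variable {m n R : Type*}

section Entries

variable [Fintype m] [DecidableEq m] [Fintype n] [DecidableEq n]

variable (m n) in
def withEntriesIn (s : Finset R) : Finset (Matrix m n R) :=
  (Fintype.piFinset fun _ : m => Fintype.piFinset fun _ : n => s).map of.toEmbedding

theorem mem_withEntriesIn {s : Finset R} {Y : Matrix m n R} :
    Y ∈ withEntriesIn m n s ↔ ∀ i j, Y i j ∈ s := by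
  rw [withEntriesIn, Finset.mem_map_equiv]
  exact Fintype.mem_piFinset.trans (forall_congr' fun _ => Fintype.mem_piFinset)

theorem card_withEntriesIn (s : Finset R) :
    (withEntriesIn m n s).card = s.card ^ (Fintype.card m * Fintype.card n) := by
  simp only [withEntriesIn, Finset.card_map, Fintype.card_piFinset, Finset.prod_const,
    Finset.card_univ, pow_mul']

end Entries

section ColsOn

variable [LinearOrder n] [Zero R]

/-- The columns of `Y` with index in `S`, in increasing order, padded with zero columns to the
fixed width `k`. -/
def colsOn (S : Finset n) (k : ℕ) (Y : Matrix m n R) : Matrix m (Fin k) R :=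
  of fun i e => if h : (e : ℕ) < S.card then Y i (S.orderEmbOfFin rfl ⟨e, h⟩) else 0

variable {S : Finset n} {k : ℕ}

theorem exists_colsOn_apply_eq (hS : S.card ≤ k) {j : n} (hj : j ∈ S) :
    ∃ e : Fin k, ∀ (Y : Matrix m n R) i, colsOn S k Y i e = Y i j := by
  obtain ⟨e, he⟩ : j ∈ range (S.orderEmbOfFin rfl) := by rwa [Finset.range_orderEmbOfFin]
  exact ⟨⟨e, e.2.trans_le hS⟩, fun Y i => by simp [colsOn, he]⟩

theorem colsOn_apply_of_forall {p : R → Prop} (h0 : p 0) {Y : Matrix m n R}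
    (hY : ∀ i j, p (Y i j)) (i : m) (e : Fin k) : p (colsOn S k Y i e) := by
  rw [colsOn, of_apply]
  split_ifs
  exacts [hY _ _, h0]

theorem colsOn_map {R' : Type*} [Zero R'] (Y : Matrix m n R) {f : R → R'} (hf : f 0 = 0) :
    (colsOn S k Y).map f = colsOn S k (Y.map f) := by
  ext i e
  simp only [colsOn, map_apply, of_apply]
  split_ifs
  exacts [rfl, hf]

end ColsOn

section Field

variable {K : Type*} [Field K]

theorem exists_finset_card_le_rank_eq_of_eqOn [Fintype m] [Fintype n] (M : Matrix m n K) :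
    ∃ T : Finset m, T.card ≤ M.rank ∧
      ∀ u ∈ span K (range M.col), ∀ v ∈ span K (range M.col), EqOn u v T → u = v := by
  obtain ⟨T, hT_card, hT_span⟩ := exists_finset_card_le_finrank_forall_mem_span (K := K) M.row
  refine ⟨T, M.rank_eq_finrank_span_row ▸ hT_card, fun u hu v hv huv => ?_⟩
  obtain ⟨c, hc⟩ : u - v ∈ LinearMap.range M.mulVecLin := M.range_mulVecLin ▸ sub_mem hu hv
  -- `(u - v) i` is row `i` dotted with `c`, and this vanishes on the span of the rows in `T`
  have hvanish : span K (M.row '' T) ≤ LinearMap.ker ((dotProductBilin K K).flip c) := by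
    rw [span_le]
    rintro _ ⟨t, ht, rfl⟩
    change M.row t ⬝ᵥ c = 0
    rw [show M.row t ⬝ᵥ c = (u - v) t from congrFun hc t, Pi.sub_apply, huv ht, sub_self]
  rw [← sub_eq_zero, ← hc]
  exact funext fun i => hvanish (hT_span i)

theorem col_mem_span_colsOn [LinearOrder n] {S : Finset n} {k : ℕ} (hS : S.card ≤ k)
    {Y : Matrix m n K}
    (hY : ∀ j, Y.col j ∈ span K (Y.col '' S)) (j : n) :
    Y.col j ∈ span K (range (colsOn S k Y).col) := by
  refine span_mono ?_ (hY j)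
  rintro _ ⟨j', hj', rfl⟩
  obtain ⟨e, he⟩ := exists_colsOn_apply_eq (R := K) hS hj'
  exact ⟨e, funext fun i => he Y i⟩

theorem eq_of_colsOn_eq_of_colsOn_transpose_eq [LinearOrder m] [LinearOrder n] {k : ℕ}
    {S : Finset n} {T : Finset m} {Y Y' : Matrix m n K} (hS : S.card ≤ k) (hT : T.card ≤ k)
    (hY : ∀ j, Y.col j ∈ span K (Y.col '' S)) (hY' : ∀ j, Y'.col j ∈ span K (Y'.col '' S))
    (hT_det : ∀ u ∈ span K (range (colsOn S k Y).col), ∀ v ∈ span K (range (colsOn S k Y).col),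
      EqOn u v T → u = v)
    (hcols : colsOn S k Y = colsOn S k Y') (hrows : colsOn T k Yᵀ = colsOn T k Y'ᵀ) :
    Y = Y' := by
  have hrows_eq : ∀ t ∈ T, ∀ j, Y t j = Y' t j := fun t ht j => by
    obtain ⟨e, he⟩ := exists_colsOn_apply_eq (R := K) hT ht
    have := congrFun (congrFun hrows j) e
    rwa [he, he] at this
  exact Matrix.ext fun i j => congrFun (hT_det _ (col_mem_span_colsOn hS hY j) _
    (hcols ▸ col_mem_span_colsOn hS hY' j) fun t ht => hrows_eq t ht j) i

theorem exists_injOn_colsOn [Fintype m] [LinearOrder m] [Fintype n] [LinearOrder n] [Zero R]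
    {f : R → K} (hf : Function.Injective f) (hf0 : f 0 = 0) (k : ℕ) :
    ∃ (S : Matrix m n R → Finset n) (T : Matrix m n R → Finset m),
      InjOn (fun Y => (S Y, colsOn (S Y) k Y, colsOn (T Y) k Yᵀ)) {Y | (Y.map f).rank ≤ k} := by
  choose S hS_card hS_span using fun Y : Matrix m n K =>
    exists_finset_card_le_finrank_forall_mem_span (K := K) Y.col
  choose T hT_card hT_det using fun C : Matrix m (Fin k) K =>
    C.exists_finset_card_le_rank_eq_of_eqOn
  refine ⟨fun Y => S (Y.map f), fun Y => T (colsOn (S (Y.map f)) k (Y.map f)), ?_⟩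
  rintro Y hY Y' - h
  simp only [Prod.mk.injEq] at h
  obtain ⟨hS, hcols, hrows⟩ := h
  rw [← hS] at hcols hrows
  have hcols_f : colsOn (S (Y.map f)) k (Y.map f) = colsOn (S (Y.map f)) k (Y'.map f) := by
    rw [← colsOn_map _ hf0, ← colsOn_map _ hf0, hcols]
  rw [← hcols_f] at hrows
  have hSk : (S (Y.map f)).card ≤ k :=
    ((hS_card _).trans_eq (rank_eq_finrank_span_cols _).symm).trans hY
  have hTk : (T (colsOn (S (Y.map f)) k (Y.map f))).card ≤ k :=
    (hT_card _).trans ((rank_le_card_width _).trans_eq (Fintype.card_fin k))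
  refine map_injective hf <| eq_of_colsOn_eq_of_colsOn_transpose_eq hSk hTk
    (hS_span _) (hS ▸ hS_span _) (hT_det _) hcols_f ?_
  simpa only [colsOn_map _ hf0, transpose_map] using congrArg (Matrix.map · f) hrows

theorem ncard_setOf_rank_le_le [Fintype m] [LinearOrder m] [Fintype n] [LinearOrder n]
    [Zero R] {f : R → K} (hf : Function.Injective f) (hf0 : f 0 = 0)
    {s : Finset R} (hs : 0 ∈ s) (k : ℕ) :
    {Y : Matrix m n R | (∀ i j, Y i j ∈ s) ∧ (Y.map f).rank ≤ k}.ncard ≤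
      2 ^ Fintype.card n * s.card ^ (Fintype.card m * k) * s.card ^ (Fintype.card n * k) := by
  obtain ⟨S, T, hinj⟩ := exists_injOn_colsOn (m := m) (n := n) hf hf0 k
  let codes : Finset (Finset n × Matrix m (Fin k) R × Matrix n (Fin k) R) :=
    Finset.univ ×ˢ withEntriesIn m (Fin k) s ×ˢ withEntriesIn n (Fin k) s
  have hmaps : MapsTo (fun Y => (S Y, colsOn (S Y) k Y, colsOn (T Y) k Yᵀ))
      {Y : Matrix m n R | (∀ i j, Y i j ∈ s) ∧ (Y.map f).rank ≤ k} codes := by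
    rintro Y ⟨hY, -⟩
    simp only [codes, Finset.coe_product, mem_prod, Finset.coe_univ, mem_univ, true_and,
      Finset.mem_coe, mem_withEntriesIn]
    exact ⟨colsOn_apply_of_forall (p := (· ∈ s)) hs hY,
      colsOn_apply_of_forall (p := (· ∈ s)) hs fun i j => hY j i⟩
  calc _ ≤ codes.card := by
        rw [← Set.ncard_coe_finset]
        exact Set.ncard_le_ncard_of_injOn _ hmaps (hinj.mono fun _ h => h.2)
          (Finset.finite_toSet _)
    _ = _ := by
        simp only [codes, Finset.card_product, Finset.card_univ, Fintype.card_finset,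
          card_withEntriesIn, Fintype.card_fin, mul_assoc]

end Field

end Matrix

/-- The number of matrices Y ∈ ℤ^{d×d} with entries in {-β,…,β} and rank (over ℚ)
at most k is at most (2β+1)^{dk} · ((2β+1)^k + 1)^{dk} · 2^d. -/
theorem stmt_4 (d k : ℕ) (β : ℕ) :
    {Y : Matrix (Fin d) (Fin d) ℤ |
        (∀ i j, |Y i j| ≤ (β : ℤ)) ∧
        (Y.map (Int.cast : ℤ → ℚ)).rank ≤ k}.ncard ≤
      (2 * β + 1) ^ (d * k) * ((2 * β + 1) ^ k + 1) ^ (d * k) * 2 ^ d := by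
  have hbox : ∀ z : ℤ, |z| ≤ β ↔ z ∈ Finset.Icc (-(β : ℤ)) β := fun z => by
    rw [abs_le, Finset.mem_Icc]
  have hcard_Icc : (Finset.Icc (-(β : ℤ)) β).card = 2 * β + 1 := by
    rw [Int.card_Icc]; omega
  have hpow : (2 * β + 1) ^ (d * k) ≤ ((2 * β + 1) ^ k + 1) ^ (d * k) := by
    rcases Nat.eq_zero_or_pos k with rfl | hk
    · simp
    · exact Nat.pow_le_pow_left ((Nat.le_self_pow hk.ne' _).trans (Nat.le_succ _)) _
  calc _ ≤ 2 ^ d * (2 * β + 1) ^ (d * k) * (2 * β + 1) ^ (d * k) := by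
        simpa only [hbox, hcard_Icc, Fintype.card_fin] using
          Matrix.ncard_setOf_rank_le_le (m := Fin d) (n := Fin d) (Int.cast_injective (α := ℚ))
            Int.cast_zero (by simp : (0 : ℤ) ∈ Finset.Icc (-(β : ℤ)) β) k
    _ ≤ _ := by
        rw [mul_comm (2 ^ d), mul_right_comm]
        exact Nat.mul_le_mul_right _ (Nat.mul_le_mul_left _ hpow)
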